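/- If G is a finite connected bipartite graph with at least 2 vertices, then gpg(G) = 2. -/
import Mathlib


open Finset SimpleGraph

variable {V : Type*}

/-- `S` is in general position in `G`: no shortest path of `G` contains more than
two vertices of `S`. -/
def IsGPSet (G : SimpleGraph V) (S : Set V) : Prop :=
  ∀ ⦃u v : V⦄ (p : G.Walk u v), p.IsPath → p.length = G.dist u v →
    (S ∩ {x | x ∈ p.support}).ncard ≤ 2

open scoped Classical in
/-- The set of vertices that can legally be played when the set of already selected
vertices is `S`. -/
noncomputable def playable [Fintype V] (G : SimpleGraph V) (S : Finset V) : Finset V :=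
  Finset.univ.filter (fun v => v ∉ S ∧ IsGPSet G (↑(insert v S) : Set V))

open scoped Classical in
/-- Value (final set size with optimal play) of the Builder-Blocker general position game
from position `S` with the given player to move (`true` = Builder, the maximiser;
`false` = Blocker, the minimiser), computed with a fuel parameter. -/
noncomputable def gameValAux [Fintype V] (G : SimpleGraph V) : ℕ → Bool → Finset V → ℕ
  | 0, _, S => S.card
  | fuel + 1, turn, S =>
    if h : (playable G S).Nonempty then
      if turn then (playable G S).sup' h (fun v => gameValAux G fuel (!turn) (insert v S))
      else (playable G S).inf' h (fun v => gameValAux G fuel (!turn) (insert v S))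
    else S.card

/-- Value of the Builder-Blocker general position game from position `S`,
with `turn = true` meaning Builder (the maximiser) is to move. Since at most
`Fintype.card V - S.card` further moves are possible, this fuel suffices. -/
noncomputable def gameVal [Fintype V] (G : SimpleGraph V) (turn : Bool) (S : Finset V) : ℕ :=
  gameValAux G (Fintype.card V - S.card) turn S

/-- The B-game general position number: Builder moves first. -/
noncomputable def gpg [Fintype V] (G : SimpleGraph V) : ℕ := gameVal G true ∅

/-- The B'-game general position number: Blocker moves first. -/
noncomputable def gpg' [Fintype V] (G : SimpleGraph V) : ℕ := gameVal G false ∅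


section Aux
variable {V : Type*}

private lemma fin2_iff {x y z : Fin 2} (h : x ≠ y) : x = z ↔ ¬ y = z := by
  fin_cases x <;> fin_cases y <;> fin_cases z <;> simp_all

private lemma walk_parity {G : SimpleGraph V} (C : G.Coloring (Fin 2)) :
    ∀ {a b : V} (p : G.Walk a b), (C a = C b ↔ Even p.length)
  | _, _, .nil => by simp
  | a, b, .cons h q => by
      rw [Walk.length_cons, Nat.even_add_one, ← walk_parity C q]
      exact fin2_iff (C.valid h)

open scoped Classical in
private lemma gameValAux_succ [Fintype V] (G : SimpleGraph V) (fuel : ℕ) (turn : Bool)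
    (S : Finset V) :
    gameValAux G (fuel+1) turn S =
      if h : (playable G S).Nonempty then
        if turn then (playable G S).sup' h (fun v => gameValAux G fuel (!turn) (insert v S))
        else (playable G S).inf' h (fun v => gameValAux G fuel (!turn) (insert v S))
      else S.card := by
  rw [gameValAux]

open scoped Classical in
private lemma mem_playable [Fintype V] {G : SimpleGraph V} {S : Finset V} {v : V} :
    v ∈ playable G S ↔ v ∉ S ∧ IsGPSet G (↑(insert v S) : Set V) := by
  simp [playable]

private lemma isGPSet_of_ncard_le {G : SimpleGraph V} {S : Set V}
    (hfin : S.Finite) (h : S.ncard ≤ 2) : IsGPSet G S := fun _ _ _ _ _ =>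
  le_trans (Set.ncard_le_ncard Set.inter_subset_left hfin) h

private lemma card_le_gameValAux [Fintype V] (G : SimpleGraph V) (fuel : ℕ) :
    ∀ (turn : Bool) (S : Finset V), S.card ≤ gameValAux G fuel turn S := by
  classical
  induction fuel with
  | zero => intro turn S; exact le_rfl
  | succ fuel ih =>
    intro turn S
    rw [gameValAux_succ]
    split_ifs with h ht
    · obtain ⟨v, hv⟩ := h
      refine le_trans ?_
        (Finset.le_sup' (fun v => gameValAux G fuel (!turn) (insert v S)) hv)
      exact le_trans (Finset.card_le_card (Finset.subset_insert v S)) (ih _ _)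
    · exact Finset.le_inf' _ _ fun v hv =>
        le_trans (Finset.card_le_card (Finset.subset_insert v S)) (ih _ _)
    · exact le_rfl

private lemma gameValAux_of_empty [Fintype V] {G : SimpleGraph V} {S : Finset V}
    (h : playable G S = ∅) : ∀ (fuel : ℕ) (turn : Bool), gameValAux G fuel turn S = S.card
  | 0, _ => rfl
  | fuel+1, turn => by rw [gameValAux_succ]; simp [h]

/-- If `uv` is an edge and `d(w,v) = d(w,u)+1` then `{w,u,v}` is not in general position. -/
private lemma not_gp {G : SimpleGraph V} (hG : G.Connected) {u v w : V}
    (huv : G.Adj u v) (hwu : w ≠ u) (hwv : w ≠ v)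
    (hd : G.dist w v = G.dist w u + 1) :
    ¬ IsGPSet G {w, u, v} := by
  intro hGP
  obtain ⟨p, hp, hlen⟩ := hG.exists_path_of_dist w u
  have hql : (p.concat huv).length = G.dist w v := by
    rw [Walk.length_concat, hlen, hd]
  have hq : (p.concat huv).IsPath := (p.concat huv).isPath_of_length_eq_dist hql
  have hkey := hGP (p.concat huv) hq hql
  have hsub : ({w, u, v} : Set V) ⊆ {x | x ∈ (p.concat huv).support} := by
    intro x hx
    rw [Walk.support_concat]
    rcases hx with rfl | rfl | rfl
    · simp [List.concat_eq_append, p.start_mem_support]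
    · simp [List.concat_eq_append, p.end_mem_support]
    · simp [List.concat_eq_append]
  rw [Set.inter_eq_left.mpr hsub] at hkey
  have h3 : ({w, u, v} : Set V).ncard = 3 :=
    Set.ncard_eq_three.mpr ⟨w, u, v, hwu, hwv, huv.ne, rfl⟩
  omega

private lemma dist_succ_or {G : SimpleGraph V} (hG : G.Connected) (hbip : G.Colorable 2)
    {u v : V} (w : V) (huv : G.Adj u v) :
    G.dist w v = G.dist w u + 1 ∨ G.dist w u = G.dist w v + 1 := by
  obtain ⟨C⟩ := hbip
  obtain ⟨pu, _, hlu⟩ := hG.exists_path_of_dist w u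
  obtain ⟨pv, _, hlv⟩ := hG.exists_path_of_dist w v
  have h1 : G.dist w v ≤ G.dist w u + 1 := by
    have := G.dist_le (pu.concat huv)
    rwa [Walk.length_concat, hlu] at this
  have h2 : G.dist w u ≤ G.dist w v + 1 := by
    have := G.dist_le (pv.concat huv.symm)
    rwa [Walk.length_concat, hlv] at this
  have hpu := walk_parity C pu
  have hpv := walk_parity C pv
  rw [hlu] at hpu; rw [hlv] at hpv
  have hne : Even (G.dist w u) ↔ ¬ Even (G.dist w v) := by
    rw [← hpu, ← hpv, eq_comm (b := C u), eq_comm (b := C v)]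
    exact fin2_iff (C.valid huv)
  rw [Nat.even_iff, Nat.even_iff] at hne
  omega

end Aux

/-- A connected bipartite graph on at least two vertices has `gpg(G) = 2`. -/
theorem stmt_3 {V : Type*} [Fintype V] (G : SimpleGraph V) (hG : G.Connected)
    (hbip : G.Colorable 2) (h2 : 2 ≤ Fintype.card V) :
    gpg G = 2 := by
  classical
  obtain ⟨m, hm⟩ : ∃ m, Fintype.card V = m + 2 := ⟨Fintype.card V - 2, by omega⟩
  have hgp2 : ∀ (S : Finset V), S.card ≤ 2 → IsGPSet G (↑S : Set V) := fun S hS =>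
    isGPSet_of_ncard_le S.finite_toSet (by rw [Set.ncard_coe_finset]; exact hS)
  have key : ∀ u v : V, G.Adj u v → playable G ({u, v} : Finset V) = ∅ := by
    intro u v huv
    ext w
    simp only [Finset.notMem_empty, iff_false, mem_playable, not_and]
    intro hw hGPw
    simp only [Finset.mem_insert, Finset.mem_singleton] at hw
    push_neg at hw
    obtain ⟨hwu, hwv⟩ := hw
    have hcoe : (↑(insert w ({u, v} : Finset V)) : Set V) = {w, u, v} := by simp
    rw [hcoe] at hGPw
    rcases dist_succ_or hG hbip w huv with hd | hd
    · exact not_gp hG huv hwu hwv hd hGPw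
    · refine not_gp hG huv.symm hwv hwu hd ?_
      have heq : ({w, v, u} : Set V) = {w, u, v} := by rw [Set.pair_comm v u]
      rw [heq]; exact hGPw
  have inner : ∀ u : V, gameValAux G (m+1) false ({u} : Finset V) = 2 := by
    intro u
    obtain ⟨w, hwne⟩ := Fintype.exists_ne_of_one_lt_card (by omega) u
    have hvex : ∃ v, G.Adj u v := by
      obtain ⟨p, hp, hl⟩ := hG.exists_path_of_dist u w
      cases p with
      | nil => exact absurd rfl hwne
      | cons h q => exact ⟨_, h⟩
    obtain ⟨v, huv⟩ := hvex
    have hvmem : v ∈ playable G ({u} : Finset V) := by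
      rw [mem_playable]
      refine ⟨by simp [huv.ne'], hgp2 _ ?_⟩
      exact le_trans (Finset.card_insert_le _ _) (by simp)
    have hne : (playable G ({u} : Finset V)).Nonempty := ⟨v, hvmem⟩
    rw [gameValAux_succ, dif_pos hne, if_neg (by simp)]
    have hcardvu : (insert v ({u} : Finset V)).card = 2 := by
      rw [Finset.card_insert_of_notMem (by simp [huv.ne'])]; simp
    apply le_antisymm
    · refine le_trans (Finset.inf'_le _ hvmem) ?_
      have hpe : playable G (insert v ({u} : Finset V)) = ∅ := by
        have h0 : insert v ({u} : Finset V) = {v, u} := rfl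
        rw [h0]; exact key v u huv.symm
      rw [gameValAux_of_empty hpe, hcardvu]
    · refine Finset.le_inf' _ _ fun x hx => ?_
      rw [mem_playable] at hx
      have hcard : (insert x ({u} : Finset V)).card = 2 := by
        rw [Finset.card_insert_of_notMem hx.1]; simp
      calc 2 = (insert x ({u} : Finset V)).card := hcard.symm
        _ ≤ _ := card_le_gameValAux G m _ _
  have hune : (playable G (∅ : Finset V)).Nonempty := by
    have : Nonempty V := Fintype.card_pos_iff.mp (by omega)
    obtain ⟨u⟩ := this
    exact ⟨u, by rw [mem_playable]; exact ⟨Finset.notMem_empty u, hgp2 _ (by simp)⟩⟩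
  have hg : gpg G = gameValAux G (m+2) true ∅ := by
    simp [gpg, gameVal, hm]
  rw [hg, gameValAux_succ, dif_pos hune, if_pos rfl]
  have hins : ∀ u : V, insert u (∅ : Finset V) = {u} := fun u => rfl
  apply le_antisymm
  · refine Finset.sup'_le _ _ fun u hu => ?_
    rw [hins u, Bool.not_true, inner u]
  · obtain ⟨u, hu⟩ := hune
    refine le_trans ?_ (Finset.le_sup'
      (fun v => gameValAux G (m+1) (!true) (insert v (∅ : Finset V))) hu)
    rw [hins u, Bool.not_true, inner u]
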